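/- arXiv:2405.02054 — 3 statements merged into one kernel-verified Lean document; each statement's English description precedes it below -/
import Mathlib

section
/- Let N' := {x + w(x) : x ∈ T} regarded as an additive subgroup of T, let π' : T → T/N' be the quotient map of additive groups, and let φ' : T → T/N' be the unique additive map with φ'(a ⊗ b) = π'(b·a² ⊗ b) for all a, b ∈ k (such a map exists and is unique). Then the inclusion T^{C₂} ↪ T induces a bijection from the kernel of the additive map π − φ|_{T^{C₂}} : T^{C₂} → T^{C₂}/N (sending x to π(x) − φ(x)) onto the kernel of π' − φ' : T → T/N'; and the natural map T^{C₂}/N → T/N' induces a bijection from the cokernel of π − φ|_{T^{C₂}} onto the cokernel of π' − φ'. -/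
open TensorProduct

noncomputable section
set_option maxHeartbeats 1000000
set_option synthInstance.maxHeartbeats 400000

variable (k : Type) [Field k] [CharP k 2]

instance : ExpChar k 2 := ExpChar.prime Nat.prime_two

/-- The subfield of squares of `k`. -/
def Ssub : Subfield k := (frobenius k 2).fieldRange

/-- `T := k ⊗_S k`. -/
abbrev Tk := k ⊗[Ssub k] k

/-- The involution `w` of `T` swapping the two tensor factors. -/
def wT : Tk k ≃ₐ[Ssub k] Tk k := Algebra.TensorProduct.comm (Ssub k) k k

lemma wT_tmul (a b : k) : wT k (a ⊗ₜ b) = b ⊗ₜ a := by simp [wT]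

/-- The subring `T^{C₂}` of fixed points of `w`. -/
def Tfix : Subring (Tk k) where
  carrier := {x | wT k x = x}
  mul_mem' := by intro a b ha hb; simp only [Set.mem_setOf_eq] at *; rw [map_mul, ha, hb]
  one_mem' := by simp only [Set.mem_setOf_eq]; rw [map_one]
  add_mem' := by intro a b ha hb; simp only [Set.mem_setOf_eq] at *; rw [map_add, ha, hb]
  zero_mem' := by simp only [Set.mem_setOf_eq]; rw [map_zero]
  neg_mem' := by intro a ha; simp only [Set.mem_setOf_eq] at *; rw [map_neg, ha]

lemma mem_Tfix_iff (x : Tk k) : x ∈ Tfix k ↔ wT k x = x := Iff.rfl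

/-- The map `x ↦ x + w(x)`. -/
def nmap : Tk k →+ Tk k :=
  AddMonoidHom.mk' (fun x => x + wT k x) (by
    intro a b
    show a + b + wT k (a + b) = (a + wT k a) + (b + wT k b)
    rw [map_add]; ring)

/-- The additive subgroup `N' = {x + w(x) : x ∈ T}` of `T`. -/
def Nsub : AddSubgroup (Tk k) := (nmap k).range

lemma mem_Nsub_iff (x : Tk k) : x ∈ Nsub k ↔ ∃ t : Tk k, t + wT k t = x := Iff.rfl

/-- `N` as an ideal of the subring of fixed points. -/
def Nideal : Ideal (Tfix k) where
  carrier := {x | (x : Tk k) ∈ Nsub k}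
  add_mem' := by
    intro a b ha hb
    simpa using add_mem ha hb
  zero_mem' := by simpa using zero_mem (Nsub k)
  smul_mem' := by
    rintro c x ⟨t, ht⟩
    refine ⟨(c : Tk k) * t, ?_⟩
    have hc : wT k (c : Tk k) = (c : Tk k) := c.2
    simp only [nmap, AddMonoidHom.mk'_apply] at ht ⊢
    rw [map_mul, hc, ← mul_add, ht]
    simp [smul_eq_mul]
  
/-- `Q := T^{C₂}/N`. -/
abbrev Qk := Tfix k ⧸ Nideal k

/-- The quotient map `π : T^{C₂} → T^{C₂}/N`. -/
def piQ : Tfix k →+* Qk k := Ideal.Quotient.mk (Nideal k)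

lemma sq_mem_Ssub (a : k) : a ^ 2 ∈ Ssub k := ⟨a, frobenius_def 2 a⟩

lemma sq_smul_def (a b : k) : (⟨a ^ 2, sq_mem_Ssub k a⟩ : Ssub k) • b = a ^ 2 * b := rfl

lemma sq_tmul (a b c : k) : ((a ^ 2 * b) ⊗ₜ[Ssub k] c : Tk k) = b ⊗ₜ (a ^ 2 * c) := by
  rw [← sq_smul_def k a b, ← sq_smul_def k a c, smul_tmul]

lemma elT_mem (a b : k) : ((b * a ^ 2) ⊗ₜ[Ssub k] b : Tk k) ∈ Tfix k := by
  rw [mem_Tfix_iff, wT_tmul, mul_comm b (a ^ 2), sq_tmul]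

/-- The element `b·a² ⊗ b` of `T^{C₂}`. -/
def elT (a b : k) : Tfix k := ⟨(b * a ^ 2) ⊗ₜ b, elT_mem k a b⟩

/-- The multiplication map `μ : T → k`. -/
def mulT : Tk k →+* k := (Algebra.TensorProduct.lmul' (Ssub k) (S := k)).toRingHom

lemma mulT_tmul (a b : k) : mulT k (a ⊗ₜ b) = a * b := by simp [mulT]

/-- The quotient map `π' : T → T/N'`. -/
def piQ' : Tk k →+ Tk k ⧸ Nsub k := QuotientAddGroup.mk' (Nsub k)

/-- The additive map `π − φ|_{T^{C₂}} : T^{C₂} → T^{C₂}/N`, for a given `φ`. -/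
def Dmap (φ : Tk k →+ Qk k) : Tfix k →+ Qk k :=
  (piQ k).toAddMonoidHom - φ.comp (Tfix k).subtype.toAddMonoidHom

instance : AddCommGroup (Tk k ⧸ Nsub k) := QuotientAddGroup.Quotient.addCommGroup _

/-- The additive map `π' − φ' : T → T/N'`, for a given `φ'`. -/
def Dmap' (φ' : Tk k →+ Tk k ⧸ Nsub k) : Tk k →+ Tk k ⧸ Nsub k := piQ' k - φ'

/-!
The inclusion `T^{C₂} ⊆ T` induces an injection `j : T^{C₂}/N → T/N'` with `j ∘ φ = φ'`, so
`j ∘ (π - φ) = (π' - φ') ∘ incl`. Since `w` is an involution, `N' ⊆ T^{C₂}`; hence if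
`(π' - φ') t ∈ im j` then `π' t ∈ im j = π'(T^{C₂})` and `t ∈ T^{C₂}`. Moreover
`π' t ≡ φ' t = j (φ t)` modulo `im (π' - φ')`, so `im j + im (π' - φ')` is everything. For a commutative
square of abelian groups with injective horizontal maps, these two properties give bijections on
kernels and on cokernels.
-/

section CommSquare

variable {A B Q Q' : Type*} [AddCommGroup A] [AddCommGroup B] [AddCommGroup Q] [AddCommGroup Q']
  {f : A →+ B} {j : Q →+ Q'} {D : A →+ Q} {D' : B →+ Q'}

theorem bijOn_ker_of_comm (hf : Function.Injective f) (hj : Function.Injective j)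
    (hcomm : ∀ x, j (D x) = D' (f x)) (hpb : ∀ t q, D' t = j q → t ∈ f.range) :
    Set.BijOn f {x | D x = 0} {t | D' t = 0} := by
  refine ⟨fun x (hx : D x = 0) => ?_, hf.injOn, fun t (ht : D' t = 0) => ?_⟩
  · show D' (f x) = 0
    rw [← hcomm, hx, map_zero]
  · obtain ⟨x, rfl⟩ := hpb t 0 (by rw [ht, map_zero])
    refine ⟨x, hj ?_, rfl⟩
    rw [hcomm, ht, map_zero]

theorem range_le_comap_range_of_comm (hcomm : ∀ x, j (D x) = D' (f x)) :
    D.range ≤ D'.range.comap j := by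
  rintro _ ⟨x, rfl⟩
  exact ⟨f x, (hcomm x).symm⟩

theorem bijective_map_coker_of_comm (hj : Function.Injective j)
    (hcomm : ∀ x, j (D x) = D' (f x)) (hpb : ∀ t q, D' t = j q → t ∈ f.range)
    (hspan : ∀ y, ∃ q t, j q + D' t = y) :
    Function.Bijective
      (QuotientAddGroup.map D.range D'.range j (range_le_comap_range_of_comm hcomm)) := by
  refine ⟨?_, fun z => ?_⟩
  · rw [injective_iff_map_eq_zero]
    intro z hz
    obtain ⟨q, rfl⟩ := QuotientAddGroup.mk_surjective z
    obtain ⟨t, ht⟩ := (QuotientAddGroup.eq_zero_iff _).mp hz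
    obtain ⟨x, rfl⟩ := hpb t q ht
    exact (QuotientAddGroup.eq_zero_iff _).mpr ⟨x, hj (by rw [hcomm, ht])⟩
  · obtain ⟨y, rfl⟩ := QuotientAddGroup.mk_surjective z
    obtain ⟨q, t, rfl⟩ := hspan y
    refine ⟨q, (QuotientAddGroup.eq_iff_sub_mem).mpr ?_⟩
    exact ⟨-t, by rw [map_neg]; abel⟩

end CommSquare

lemma wT_wT (x : Tk k) : wT k (wT k x) = x :=
  TensorProduct.comm_comm _ _ _ x

lemma Nsub_le_Tfix : Nsub k ≤ (Tfix k).toAddSubgroup := by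
  rintro _ ⟨t, rfl⟩
  show wT k (t + wT k t) = t + wT k t
  rw [map_add, wT_wT, add_comm]

def inclQ : Qk k →+ Tk k ⧸ Nsub k :=
  QuotientAddGroup.map (Nideal k).toAddSubgroup (Nsub k) (Tfix k).subtype.toAddMonoidHom le_rfl

lemma inclQ_piQ (x : Tfix k) : inclQ k (piQ k x) = piQ' k x := rfl

lemma inclQ_injective : Function.Injective (inclQ k) := by
  rw [injective_iff_map_eq_zero]
  intro q hq
  obtain ⟨x, rfl⟩ := Ideal.Quotient.mk_surjective q
  exact Ideal.Quotient.eq_zero_iff_mem.mpr ((QuotientAddGroup.eq_zero_iff _).mp hq)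

section TwistedMaps

variable {k} {φ : Tk k →+ Qk k} {φ' : Tk k →+ Tk k ⧸ Nsub k}

lemma inclQ_comp_eq (hφ : ∀ a b : k, φ (a ⊗ₜ b) = piQ k (elT k a b))
    (hφ' : ∀ a b : k, φ' (a ⊗ₜ b) = piQ' k ((b * a ^ 2) ⊗ₜ b)) :
    (inclQ k).comp φ = φ' := by
  ext t
  induction t using TensorProduct.induction_on with
  | zero => simp only [map_zero]
  | tmul a b => exact (congrArg (inclQ k) (hφ a b)).trans (hφ' a b).symm
  | add s t hs ht => simp only [map_add, hs, ht]

lemma inclQ_Dmap (hφφ' : (inclQ k).comp φ = φ') (x : Tfix k) :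
    inclQ k (Dmap k φ x) = Dmap' k φ' x := by
  rw [Dmap, Dmap', AddMonoidHom.sub_apply, AddMonoidHom.sub_apply, map_sub, ← hφφ']
  rfl

lemma mem_Tfix_of_Dmap'_eq (hφφ' : (inclQ k).comp φ = φ') (t : Tk k) (q : Qk k)
    (ht : Dmap' k φ' t = inclQ k q) : t ∈ Tfix k := by
  obtain ⟨x, hx⟩ := Ideal.Quotient.mk_surjective (q + φ t)
  have hπ : piQ' k t = piQ' k x := by
    rw [← inclQ_piQ, piQ, hx, map_add, ← ht, Dmap', AddMonoidHom.sub_apply, ← hφφ',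
      AddMonoidHom.comp_apply, sub_add_cancel]
  have hmem : t - x ∈ Nsub k := QuotientAddGroup.eq_iff_sub_mem.mp hπ
  simpa using add_mem (Nsub_le_Tfix k hmem) x.2

lemma exists_inclQ_add_Dmap' (hφφ' : (inclQ k).comp φ = φ') (y : Tk k ⧸ Nsub k) :
    ∃ q t, inclQ k q + Dmap' k φ' t = y := by
  obtain ⟨t, rfl⟩ := QuotientAddGroup.mk_surjective y
  refine ⟨φ t, t, ?_⟩
  rw [← AddMonoidHom.comp_apply, hφφ', Dmap', AddMonoidHom.sub_apply, add_sub_cancel]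
  rfl

end TwistedMaps

theorem stmt_3 (φ : Tk k →+ Qk k)
    (hφ : ∀ a b : k, φ (a ⊗ₜ b) = piQ k (elT k a b))
    (φ' : Tk k →+ Tk k ⧸ Nsub k)
    (hφ' : ∀ a b : k, φ' (a ⊗ₜ b) = piQ' k ((b * a ^ 2) ⊗ₜ b)) :
    Set.BijOn (fun x : Tfix k => (x : Tk k))
      {x : Tfix k | Dmap k φ x = 0} {t : Tk k | Dmap' k φ' t = 0} ∧
    ∃ g : (Qk k ⧸ (Dmap k φ).range) →+ ((Tk k ⧸ Nsub k) ⧸ (Dmap' k φ').range),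
      (∀ x : Tfix k,
        g (QuotientAddGroup.mk' (Dmap k φ).range (piQ k x)) =
          QuotientAddGroup.mk' (Dmap' k φ').range (piQ' k (x : Tk k))) ∧
      Function.Bijective g := by
  have hφφ' := inclQ_comp_eq hφ hφ'
  have hcomm : ∀ x, inclQ k (Dmap k φ x) = Dmap' k φ' ((Tfix k).subtype.toAddMonoidHom x) :=
    inclQ_Dmap hφφ'
  have hpb : ∀ t q, Dmap' k φ' t = inclQ k q → t ∈ (Tfix k).subtype.toAddMonoidHom.range :=
    fun t q ht => ⟨⟨t, mem_Tfix_of_Dmap'_eq hφφ' t q ht⟩, rfl⟩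
  exact ⟨bijOn_ker_of_comm Subtype.val_injective (inclQ_injective k) hcomm hpb,
    _, fun _ => rfl, bijective_map_coker_of_comm (inclQ_injective k) hcomm hpb
      (exists_inclQ_add_Dmap' hφφ')⟩
end
end

section
/- If {x_i}_{i∈I} is a 2-basis of k, then the family {Δ(x)^ξ : ξ ⊆ I finite} is a basis of T as a k-vector space (with k acting through the left tensor factor). -/
open TensorProduct

noncomputable section
set_option maxHeartbeats 1000000
set_option synthInstance.maxHeartbeats 400000

variable (k : Type) [Field k] [CharP k 2]

/-- `Δ(a) := 1 ⊗ a + a ⊗ 1 ∈ T`. -/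
def Delta (a : k) : Tk k := (1 : k) ⊗ₜ a + a ⊗ₜ (1 : k)

/-! Base change of the `S`-basis `x^η` of `k` gives the `k`-basis `1 ⊗ x^η` of `T`. Expanding the
product, `Δ(x)^ξ = ∑_{η ⊆ ξ} x^(ξ \ η) · (1 ⊗ x^η)`, so the transition matrix from `1 ⊗ x^η` to
`Δ(x)^ξ` is unitriangular with respect to inclusion of finite subsets, hence invertible. -/

open Module Submodule Set

namespace Module.Basis

variable {K M ι : Type*} [Ring K] [AddCommGroup M] [Module K M] [PartialOrder ι]
  (B : Basis ι K M) {v : ι → M}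

theorem linearIndependent_of_repr_unitriangular (hdiag : ∀ i, B.repr (v i) i = 1)
    (hlower : ∀ i j, B.repr (v i) j ≠ 0 → j ≤ i) : LinearIndependent K v := by
  classical
  rw [linearIndependent_iff']
  intro s g hsum i hi
  by_contra hgi
  obtain ⟨i₀, hi₀, hmax⟩ :=
    (s.filter (g · ≠ 0)).exists_maximal ⟨i, Finset.mem_filter.2 ⟨hi, hgi⟩⟩
  rw [Finset.mem_filter] at hi₀
  -- only `v i₀` contributes to the `i₀`-th coordinate, by maximality of `i₀`
  have hcoeff : B.repr (∑ j ∈ s, g j • v j) i₀ = g i₀ := by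
    simp only [map_sum, map_smul, Finsupp.finsetSum_apply, Finsupp.smul_apply, smul_eq_mul]
    rw [Finset.sum_eq_single_of_mem i₀ hi₀.1 fun j hj hne => ?_, hdiag, mul_one]
    by_cases hgj : g j = 0
    · rw [hgj, zero_mul]
    · by_contra h
      have hle := hlower j i₀ (right_ne_zero_of_mul h)
      exact hne (le_antisymm (hmax (by simp [hj, hgj]) hle) hle)
  rw [hsum, map_zero, Finsupp.zero_apply] at hcoeff
  exact hi₀.2 hcoeff.symm

theorem span_range_eq_top_of_repr_unitriangular [WellFoundedLT ι]
    (hdiag : ∀ i, B.repr (v i) i = 1) (hlower : ∀ i j, B.repr (v i) j ≠ 0 → j ≤ i) :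
    span K (range v) = ⊤ := by
  classical
  have hB : ∀ i, B i ∈ span K (range v) := by
    intro i
    induction i using WellFoundedLT.induction with
    | _ i ih =>
      have hlt : v i - B i ∈ span K (B '' Iio i) := by
        rw [B.mem_span_image]
        intro j hj
        have hj : B.repr (v i) j - Finsupp.single i 1 j ≠ 0 := by simpa using hj
        rcases eq_or_ne j i with rfl | hne
        · simp [hdiag] at hj
        · have hj : B.repr (v i) j ≠ 0 := by simpa [Finsupp.single_apply, hne.symm] using hj
          exact lt_of_le_of_ne (hlower i j hj) hne
      have hle : span K (B '' Iio i) ≤ span K (range v) :=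
        span_le.2 (by rintro _ ⟨j, hj, rfl⟩; exact ih j hj)
      simpa using sub_mem (subset_span (mem_range_self i)) (hle hlt)
  rw [eq_top_iff, ← B.span_eq, span_le]
  rintro _ ⟨i, rfl⟩
  exact hB i

end Module.Basis

namespace TensorProduct

variable {R A : Type*} [CommRing R] [CommRing A] [Algebra R A]

theorem prod_one_tmul_add_tmul_one {ι : Type*} [DecidableEq ι] (x : ι → A) (s : Finset ι) :
    ∏ i ∈ s, ((1 : A) ⊗ₜ[R] x i + x i ⊗ₜ[R] (1 : A)) =
      ∑ t ∈ s.powerset, (∏ i ∈ s \ t, x i) • ((1 : A) ⊗ₜ[R] ∏ i ∈ t, x i) := by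
  rw [Finset.prod_add]
  refine Finset.sum_congr rfl fun t _ => ?_
  have h1 := map_prod (Algebra.TensorProduct.includeRight : A →ₐ[R] A ⊗[R] A) x t
  have h2 := map_prod (Algebra.TensorProduct.includeLeft : A →ₐ[R] A ⊗[R] A) x (s \ t)
  simp only [Algebra.TensorProduct.includeRight_apply,
    Algebra.TensorProduct.includeLeft_apply] at h1 h2
  rw [← h1, ← h2, Algebra.TensorProduct.tmul_mul_tmul, smul_tmul', smul_eq_mul, mul_one]
  simp only [one_mul, mul_one]

theorem baseChange_repr_prod_one_tmul_add_tmul_one {I : Type*} [DecidableEq I]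
    (b : Basis (Finset I) R A) (x : I → A) (hb : ∀ ξ, b ξ = ∏ i ∈ ξ, x i) (ξ η : Finset I) :
    (b.baseChange A).repr (∏ i ∈ ξ, ((1 : A) ⊗ₜ[R] x i + x i ⊗ₜ[R] (1 : A))) η =
      if η ⊆ ξ then ∏ i ∈ ξ \ η, x i else 0 := by
  simp_rw [prod_one_tmul_add_tmul_one, ← hb, ← Basis.baseChange_apply]
  simp [Finsupp.single_apply, Finset.sum_ite_eq']

end TensorProduct

/-- If `{x_i}` is a 2-basis of `k`, then the family `(Δ(x)^ξ)` over finite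
subsets `ξ ⊆ I` is a basis of `T` as a `k`-vector space (through the left tensor factor). -/
theorem stmt_4 {I : Type} (x : I → k)
    (h2basis : LinearIndependent (Ssub k) (fun ξ : Finset I => ∏ i ∈ ξ, x i) ∧
      Submodule.span (Ssub k) (Set.range (fun ξ : Finset I => ∏ i ∈ ξ, x i)) = ⊤) :
    LinearIndependent k (fun ξ : Finset I => ∏ i ∈ ξ, Delta k (x i)) ∧
    Submodule.span k (Set.range (fun ξ : Finset I => ∏ i ∈ ξ, Delta k (x i))) = ⊤ := by
  classical
  obtain ⟨hli, hsp⟩ := h2basis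
  let b := Basis.mk hli hsp.ge
  have hrepr := baseChange_repr_prod_one_tmul_add_tmul_one b x (Basis.mk_apply hli hsp.ge)
  have hdiag (ξ : Finset I) : (b.baseChange k).repr (∏ i ∈ ξ, Delta k (x i)) ξ = 1 := by
    simp [Delta, hrepr]
  have hlower (ξ η : Finset I) :
      (b.baseChange k).repr (∏ i ∈ ξ, Delta k (x i)) η ≠ 0 → η ≤ ξ := by
    simp only [Delta, hrepr]
    split_ifs with h <;> simp [h]
  exact ⟨(b.baseChange k).linearIndependent_of_repr_unitriangular hdiag hlower,
    (b.baseChange k).span_range_eq_top_of_repr_unitriangular hdiag hlower⟩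
end
end

section
/- Let J := ker(μ : T → k), an ideal of T. If {x_i}_{i∈I} is a 2-basis of k, then for every q ≥ 1: (i) the family {Δ(x)^ξ : ξ ⊆ I finite, |ξ| ≥ q} is a basis of the ideal power J^q as a k-vector space; and (ii) the images of the elements Δ(x)^ξ with |ξ| = q form a basis of the quotient J^q/J^{q+1} as a k-vector space. -/
open TensorProduct

noncomputable section
set_option maxHeartbeats 1000000
set_option synthInstance.maxHeartbeats 400000

variable (k : Type) [Field k] [CharP k 2]

/-- The ideal `J := ker(μ : T → k)`. -/
def Jk : Ideal (Tk k) := RingHom.ker (mulT k)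

lemma Delta_mem_Jk (a : k) : Delta k a ∈ Jk k := by
  simp only [Jk, RingHom.mem_ker, Delta, map_add, mulT_tmul, one_mul, mul_one]
  exact CharTwo.add_self_eq_zero a

lemma prod_mem_pow_card {R : Type} [CommRing R] (J : Ideal R) {ι : Type} (ξ : Finset ι)
    (f : ι → R) (hf : ∀ i ∈ ξ, f i ∈ J) : (∏ i ∈ ξ, f i) ∈ J ^ ξ.card := by
  induction ξ using Finset.cons_induction with
  | empty => simp
  | cons a s ha ih =>
    rw [Finset.prod_cons, Finset.card_cons, pow_succ, mul_comm]
    exact Ideal.mul_mem_mul (hf a (Finset.mem_cons_self a s))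
      (ih fun i hi => hf i (Finset.mem_cons_of_mem hi))

/-- `Δ(x)^ξ := ∏_{i ∈ ξ} Δ(x_i)`. -/
def deltaProd {I : Type} (x : I → k) (ξ : Finset I) : Tk k := ∏ i ∈ ξ, Delta k (x i)

lemma deltaProd_mem {I : Type} (x : I → k) (q : ℕ) (ξ : Finset I) (h : q ≤ ξ.card) :
    deltaProd k x ξ ∈ Jk k ^ q :=
  Ideal.pow_le_pow_right h (prod_mem_pow_card (Jk k) ξ _ fun i _ => Delta_mem_Jk k (x i))

/-- `J^q` as a `k`-submodule of `T`. -/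
def JqMod (q : ℕ) : Submodule k (Tk k) := (Jk k ^ q).restrictScalars k

/-- `J^{q+1}` viewed inside `J^q`. -/
def JqSub (q : ℕ) : Submodule k (JqMod k q) := (JqMod k (q + 1)).comap (JqMod k q).subtype

/-!
In characteristic 2, `Δ(a) = 1 ⊗ a + a ⊗ 1` and `1 ⊗ a = Δ(a) + a ⊗ 1`, so expanding the products
gives `Δ(x)^ξ = ∑_{t ⊆ ξ} x^{ξ∖t} · (1 ⊗ x^t)` and `1 ⊗ x^ξ = ∑_{t ⊆ ξ} x^{ξ∖t} · Δ(x)^t`.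
Hence the `k`-linear map `1 ⊗ x^ξ ↦ Δ(x)^ξ` is an involution, and since the `1 ⊗ x^ξ` form a
`k`-basis of `T`, so do the `Δ(x)^ξ`. As `μ(Δ(x)^ξ) = 0` for `ξ ≠ ∅`, `J` is spanned by the
`Δ(x)^ξ` with `ξ ≠ ∅`; as `Δ(a)² = 0`, these multiply like square-free monomials, so `J^q` is
exactly the span of the `Δ(x)^ξ` with `|ξ| ≥ q`. Both claims are then statements about subfamilies
of a basis.
-/

open Module Submodule Set Algebra.TensorProduct

theorem Finset.prod_add_algebraMap {R A ι : Type*} [CommSemiring R] [CommSemiring A]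
    [Algebra R A] [DecidableEq ι] (s : Finset ι) (u : ι → A) (c : ι → R) :
    ∏ i ∈ s, (u i + algebraMap R A (c i)) =
      ∑ t ∈ s.powerset, (∏ i ∈ s \ t, c i) • ∏ i ∈ t, u i := by
  rw [Finset.prod_add]
  refine Finset.sum_congr rfl fun t _ => ?_
  rw [Algebra.smul_def, map_prod, mul_comm]

def Module.Basis.ofConstrInvolutive {ι R M : Type*} [CommSemiring R] [AddCommMonoid M]
    [Module R M] (b : Basis ι R M) (v : ι → M) (hv : ∀ i, b.constr R v (v i) = b i) :
    Basis ι R M :=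
  b.map <| LinearEquiv.ofInvolutive (b.constr R v) fun m => by
    have : (b.constr R v).comp (b.constr R v) = LinearMap.id := b.ext fun i => by simp [hv]
    exact LinearMap.congr_fun this m

theorem Module.Basis.coe_ofConstrInvolutive {ι R M : Type*} [CommSemiring R] [AddCommMonoid M]
    [Module R M] (b : Basis ι R M) (v : ι → M) (hv : ∀ i, b.constr R v (v i) = b i) :
    ⇑(b.ofConstrInvolutive v hv) = v := by
  ext i
  exact b.constr_basis R v i

section QuotientBasis

variable {ι κ R M : Type*} [Ring R] [AddCommGroup M] [Module R M] {v : ι → M} {e : κ → ι}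
  {P Q : Submodule R M}

theorem Submodule.map_subtype_span_range {g : κ → P} (hg : ∀ j, (g j : M) = v (e j)) :
    (span R (range g)).map P.subtype = span R (v '' range e) := by
  rw [map_span, ← range_comp, ← range_comp]
  exact congrArg _ (congrArg _ (funext hg))

theorem Submodule.linearIndependent_quotient_mk (hv : LinearIndependent R v)
    (he : Function.Injective e) {t : Set ι} (het : Disjoint (range e) t)
    (hQ : Q = span R (v '' t)) {g : κ → P} (hg : ∀ j, (g j : M) = v (e j)) :
    LinearIndependent R fun j => Submodule.Quotient.mk (p := Q.comap P.subtype) (g j) := by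
  have hg_li : LinearIndependent R g :=
    LinearIndependent.of_comp P.subtype <| by
      convert hv.comp e he using 1
      exact funext hg
  refine ((Q.comap P.subtype).mkQ.linearIndependent_iff_of_disjoint ?_).2 hg_li
  rw [disjoint_def]
  intro y hy hyQ
  rw [ker_mkQ, mem_comap, hQ] at hyQ
  have hy' := mem_map_of_mem (f := P.subtype) hy
  rw [map_subtype_span_range hg] at hy'
  exact Subtype.ext (disjoint_def.1 (hv.disjoint_span_image het) _ hy' hyQ)

theorem Submodule.span_range_quotient_mk_eq_top {s t : Set ι} (hP : P = span R (v '' s))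
    (hQ : Q = span R (v '' t)) (hs : s ⊆ range e ∪ t) {g : κ → P}
    (hg : ∀ j, (g j : M) = v (e j)) :
    span R (range fun j => Submodule.Quotient.mk (p := Q.comap P.subtype) (g j)) = ⊤ := by
  have hrange : (range fun j => Submodule.Quotient.mk (p := Q.comap P.subtype) (g j)) =
      (Q.comap P.subtype).mkQ '' range g :=
    range_comp _ _
  rw [hrange, ← map_span, map_mkQ_eq_top]
  refine map_injective_of_injective P.injective_subtype ?_
  rw [map_sup, map_comap_subtype, map_subtype_span_range hg, map_subtype_top]
  refine le_antisymm (sup_le inf_le_left ?_) ?_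
  · rw [← map_subtype_span_range hg]
    exact map_subtype_le _ _
  have hs' : v '' s ⊆ v '' (s ∩ t) ∪ v '' range e := by
    rw [← image_union]
    refine image_mono fun i hi => ?_
    rcases hs hi with h | h
    exacts [Or.inr h, Or.inl ⟨hi, h⟩]
  calc P = span R (v '' s) := hP
    _ ≤ span R (v '' (s ∩ t)) ⊔ span R (v '' range e) := by
      rw [← span_union]
      exact span_mono hs'
    _ ≤ P ⊓ Q ⊔ span R (v '' range e) := by
      refine sup_le_sup_right (le_inf ?_ ?_) _
      · exact hP ▸ span_mono (image_mono inter_subset_left)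
      · exact hQ ▸ span_mono (image_mono inter_subset_right)

end QuotientBasis

theorem Delta_eq_includeRight_add (a : k) :
    Delta k a = includeRight a + algebraMap k (Tk k) a := rfl

theorem includeRight_eq_Delta_add (a : k) :
    (includeRight a : Tk k) = Delta k a + algebraMap k (Tk k) a := by
  rw [Delta_eq_includeRight_add, add_assoc, ← map_add, CharTwo.add_self_eq_zero, map_zero,
    add_zero]

theorem Delta_mul_self (a : k) : Delta k a * Delta k a = 0 := by
  have h2 : (2 : Tk k) = 0 := by
    rw [← map_ofNat (algebraMap k (Tk k)) 2, CharTwo.two_eq_zero, map_zero]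
  have hsq : (includeRight (a * a) : Tk k) = algebraMap k (Tk k) (a * a) := by
    simpa [← sq] using (sq_tmul k a 1 1).symm
  rw [map_mul, map_mul] at hsq
  rw [Delta_eq_includeRight_add]
  linear_combination hsq + (algebraMap k (Tk k) a * algebraMap k (Tk k) a +
    includeRight a * algebraMap k (Tk k) a) * h2

section DeltaBasis

variable {I : Type} (x : I → k)

theorem deltaProd_eq_sum [DecidableEq I] (ξ : Finset I) :
    deltaProd k x ξ = ∑ t ∈ ξ.powerset, (∏ i ∈ ξ \ t, x i) • (1 : k) ⊗ₜ[Ssub k] ∏ i ∈ t, x i := by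
  simp only [deltaProd, Delta_eq_includeRight_add, Finset.prod_add_algebraMap]
  exact Finset.sum_congr rfl fun t _ => by rw [← map_prod, includeRight_apply]

theorem one_tmul_prod_eq_sum [DecidableEq I] (ξ : Finset I) :
    (1 : k) ⊗ₜ[Ssub k] ∏ i ∈ ξ, x i = ∑ t ∈ ξ.powerset, (∏ i ∈ ξ \ t, x i) • deltaProd k x t := by
  rw [← includeRight_apply, map_prod]
  simp only [includeRight_eq_Delta_add, Finset.prod_add_algebraMap, deltaProd]

def deltaBasis (b : Basis (Finset I) (Ssub k) k) (hb : ∀ ξ, b ξ = ∏ i ∈ ξ, x i) :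
    Basis (Finset I) k (Tk k) :=
  (Algebra.TensorProduct.basis k b).ofConstrInvolutive (deltaProd k x) fun ξ => by
    classical
    have hB (t : Finset I) : basis k b t = (1 : k) ⊗ₜ ∏ i ∈ t, x i := by rw [basis_apply, hb]
    rw [deltaProd_eq_sum]
    simp only [← hB, map_sum, map_smul, Basis.constr_basis]
    rw [hB, one_tmul_prod_eq_sum]

theorem coe_deltaBasis (b : Basis (Finset I) (Ssub k) k) (hb : ∀ ξ, b ξ = ∏ i ∈ ξ, x i) :
    ⇑(deltaBasis k x b hb) = deltaProd k x :=
  Basis.coe_ofConstrInvolutive ..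

theorem deltaProd_mul_of_disjoint [DecidableEq I] {ξ η : Finset I} (h : Disjoint ξ η) :
    deltaProd k x ξ * deltaProd k x η = deltaProd k x (ξ ∪ η) := by
  rw [deltaProd, deltaProd, deltaProd, Finset.prod_union h]

theorem deltaProd_mul_of_not_disjoint {ξ η : Finset I} (h : ¬Disjoint ξ η) :
    deltaProd k x ξ * deltaProd k x η = 0 := by
  classical
  obtain ⟨i, hiξ, hiη⟩ := Finset.not_disjoint_iff.1 h
  rw [deltaProd, deltaProd, ← Finset.mul_prod_erase _ _ hiξ, ← Finset.mul_prod_erase _ _ hiη,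
    mul_mul_mul_comm, Delta_mul_self, zero_mul]

def deltaSpan (q : ℕ) : Submodule k (Tk k) := span k (deltaProd k x '' {ξ | q ≤ ξ.card})

theorem deltaSpan_mul_le (p r : ℕ) :
    deltaSpan k x p * deltaSpan k x r ≤ deltaSpan k x (p + r) := by
  classical
  rw [deltaSpan, deltaSpan, span_mul_span, span_le]
  rintro _ ⟨_, ⟨ξ, hξ, rfl⟩, _, ⟨η, hη, rfl⟩, rfl⟩
  dsimp only
  by_cases h : Disjoint ξ η
  · rw [deltaProd_mul_of_disjoint k x h]
    refine subset_span ⟨ξ ∪ η, ?_, rfl⟩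
    rw [mem_ofPred_eq, Finset.card_union_of_disjoint h]
    exact add_le_add hξ hη
  · rw [deltaProd_mul_of_not_disjoint k x h]
    exact zero_mem _

theorem deltaSpan_le_JqMod (q : ℕ) : deltaSpan k x q ≤ JqMod k q :=
  span_le.2 <| by
    rintro _ ⟨ξ, hξ, rfl⟩
    exact deltaProd_mem k x q ξ hξ

theorem deltaSpan_zero (b : Basis (Finset I) (Ssub k) k) (hb : ∀ ξ, b ξ = ∏ i ∈ ξ, x i) :
    deltaSpan k x 0 = ⊤ := by
  rw [deltaSpan, ← coe_deltaBasis k x b hb]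
  simp

/-- `μ` vanishes on every `Δ(x)^ξ` except `Δ(x)^∅ = 1`. -/
theorem deltaBasis_coord_empty (b : Basis (Finset I) (Ssub k) k)
    (hb : ∀ ξ, b ξ = ∏ i ∈ ξ, x i) :
    (deltaBasis k x b hb).coord ∅ = (lmul'' (Ssub k) (S := k)).toLinearMap := by
  classical
  refine (deltaBasis k x b hb).ext fun ξ => ?_
  rw [Basis.coord_apply, Basis.repr_self, coe_deltaBasis, Finsupp.single_apply,
    AlgHom.toLinearMap_apply, deltaProd, map_prod]
  rcases ξ.eq_empty_or_nonempty with rfl | ⟨i, hi⟩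
  · simp
  · rw [if_neg (Finset.ne_empty_of_mem hi)]
    exact (Finset.prod_eq_zero hi (RingHom.mem_ker.1 (Delta_mem_Jk k (x i)))).symm

theorem Jk_le_deltaSpan_one (b : Basis (Finset I) (Ssub k) k) (hb : ∀ ξ, b ξ = ∏ i ∈ ξ, x i) :
    (Jk k).restrictScalars k ≤ deltaSpan k x 1 := by
  intro t ht
  rw [deltaSpan, ← coe_deltaBasis k x b hb, Basis.mem_span_image]
  intro ξ hξ
  show 1 ≤ ξ.card
  rw [Finset.one_le_card, Finset.nonempty_iff_ne_empty]
  rintro rfl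
  refine Finsupp.mem_support_iff.1 hξ ?_
  rw [← Basis.coord_apply, deltaBasis_coord_empty k x b hb]
  exact ht

theorem JqMod_eq_deltaSpan (b : Basis (Finset I) (Ssub k) k) (hb : ∀ ξ, b ξ = ∏ i ∈ ξ, x i)
    (q : ℕ) :
    JqMod k q = deltaSpan k x q := by
  refine le_antisymm ?_ (deltaSpan_le_JqMod k x q)
  induction q with
  | zero => simp [JqMod, deltaSpan_zero k x b hb]
  | succ q ih =>
    calc JqMod k (q + 1) = JqMod k q * (Jk k).restrictScalars k := by
          rw [JqMod, Submodule.pow_succ, Ideal.restrictScalars_mul]; rfl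
      _ ≤ deltaSpan k x q * deltaSpan k x 1 := mul_le_mul' ih (Jk_le_deltaSpan_one k x b hb)
      _ ≤ deltaSpan k x (q + 1) := deltaSpan_mul_le k x q 1

end DeltaBasis

theorem stmt_5 {I : Type} (x : I → k) (q : ℕ)
    (h2basis : LinearIndependent (Ssub k) (fun ξ : Finset I => ∏ i ∈ ξ, x i) ∧
      Submodule.span (Ssub k) (Set.range (fun ξ : Finset I => ∏ i ∈ ξ, x i)) = ⊤) :
    (LinearIndependent k (fun ξ : {ξ : Finset I // q ≤ ξ.card} => deltaProd k x ξ.1) ∧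
      Submodule.span k (Set.range (fun ξ : {ξ : Finset I // q ≤ ξ.card} => deltaProd k x ξ.1)) =
        JqMod k q) ∧
    (LinearIndependent k (fun ξ : {ξ : Finset I // ξ.card = q} =>
        Submodule.Quotient.mk (p := JqSub k q)
          (⟨deltaProd k x ξ.1, deltaProd_mem k x q ξ.1 (le_of_eq ξ.2.symm)⟩ : JqMod k q)) ∧
      Submodule.span k (Set.range (fun ξ : {ξ : Finset I // ξ.card = q} =>
        Submodule.Quotient.mk (p := JqSub k q)
          (⟨deltaProd k x ξ.1, deltaProd_mem k x q ξ.1 (le_of_eq ξ.2.symm)⟩ : JqMod k q))) = ⊤) := by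
  let b : Basis (Finset I) (Ssub k) k := .mk h2basis.1 h2basis.2.ge
  have hb (ξ : Finset I) : b ξ = ∏ i ∈ ξ, x i := Basis.mk_apply ..
  have hJ := JqMod_eq_deltaSpan k x b hb
  have hli : LinearIndependent k (deltaProd k x) :=
    coe_deltaBasis k x b hb ▸ (deltaBasis k x b hb).linearIndependent
  have hcard : range (Subtype.val : {ξ : Finset I // ξ.card = q} → Finset I) =
      {ξ | q ≤ ξ.card} \ {ξ | q + 1 ≤ ξ.card} := by
    ext ξ
    simp only [Subtype.range_coe_subtype, mem_ofPred_eq, mem_sdiff]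
    omega
  refine ⟨⟨hli.comp _ Subtype.val_injective, ?_⟩, ?_, ?_⟩
  · rw [hJ, deltaSpan, range_comp' (deltaProd k x) Subtype.val, Subtype.range_coe_subtype]
  · exact linearIndependent_quotient_mk hli Subtype.val_injective
      (hcard ▸ disjoint_sdiff_left) (hJ (q + 1)) fun _ => rfl
  · exact span_range_quotient_mk_eq_top (hJ q) (hJ (q + 1))
      (hcard ▸ subset_sdiff_union _ _) fun _ => rfl
end
end
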